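/- Let 𝓕 be a thin family of finite subsets of ℕ and M an infinite set deciding all of its finite subsets. Then there is an infinite N ⊆ M such that for every finite S ⊆ N strongly accepted by N and every n ∈ N with max S < n, the set N strongly accepts S ∪ {n}. -/
import Mathlib


/-- `S` is an initial segment of `T` (finite sets identified with increasing enumerations). -/
def InitSeg (S T : Finset ℕ) : Prop :=
  ∃ S2 : Finset ℕ, T = S ∪ S2 ∧ ∀ a ∈ S, ∀ b ∈ S2, a < b

/-- A family of finite sets is thin: no member is a proper initial segment of another. -/
def ThinFam (F : Set (Finset ℕ)) : Prop :=
  ∀ S ∈ F, ∀ T ∈ F, InitSeg S T → S = T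

/-- Two finite sets are comparable if one is an initial segment of the other. -/
def Comparable (s t : Finset ℕ) : Prop := InitSeg s t ∨ InitSeg t s

/-- `B` accepts `S` (with respect to `F`): some `t ∈ F` comparable with `S`
satisfies `t ∖ S ⊆ B`. -/
def Accepts (F : Set (Finset ℕ)) (S : Finset ℕ) (B : Set ℕ) : Prop :=
  ∃ t ∈ F, Comparable t S ∧ ((t \ S : Finset ℕ) : Set ℕ) ⊆ B

/-- `B` rejects `S`: `B` does not accept `S`. -/
def Rejects (F : Set (Finset ℕ)) (S : Finset ℕ) (B : Set ℕ) : Prop :=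
  ¬ Accepts F S B

/-- `B` strongly accepts `S`: every infinite subset of `B` accepts `S`. -/
def StronglyAccepts (F : Set (Finset ℕ)) (S : Finset ℕ) (B : Set ℕ) : Prop :=
  ∀ C ⊆ B, C.Infinite → Accepts F S C

/-- `B` decides `S`: `B` rejects `S` or strongly accepts `S`. -/
def Decides (F : Set (Finset ℕ)) (S : Finset ℕ) (B : Set ℕ) : Prop :=
  Rejects F S B ∨ StronglyAccepts F S B

lemma accepts_mono {F : Set (Finset ℕ)} {S : Finset ℕ} {C B : Set ℕ}
    (h : Accepts F S C) (hCB : C ⊆ B) : Accepts F S B := by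
  obtain ⟨t, ht, hc, hsub⟩ := h
  exact ⟨t, ht, hc, hsub.trans hCB⟩

/-- The set of bad next elements for `S`. -/
def BadSet (F : Set (Finset ℕ)) (M : Set ℕ) (S : Finset ℕ) : Set ℕ :=
  {n | n ∈ M ∧ (∀ a ∈ S, a < n) ∧ ¬ StronglyAccepts F (insert n S) M}

lemma badset_finite (F : Set (Finset ℕ)) (M : Set ℕ)
    (hdec : ∀ T : Finset ℕ, (T : Set ℕ) ⊆ M → Decides F T M)
    (S : Finset ℕ) (hS : (S : Set ℕ) ⊆ M) (hSA : StronglyAccepts F S M) :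
    (BadSet F M S).Finite := by
  by_contra hinf
  have hinf : (BadSet F M S).Infinite := hinf
  have hCM : BadSet F M S ⊆ M := fun n hn => hn.1
  have hrej : ∀ n ∈ BadSet F M S, Rejects F (insert n S) M := by
    intro n hn
    have hsub' : ((insert n S : Finset ℕ) : Set ℕ) ⊆ M := by
      intro x hx
      simp only [Finset.coe_insert, Set.mem_insert_iff] at hx
      rcases hx with rfl | hx
      · exact hn.1
      · exact hS hx
    rcases hdec (insert n S) hsub' with h | h
    · exact h
    · exact absurd h hn.2.2
  obtain ⟨t, htF, hcomp, hsub⟩ := hSA (BadSet F M S) hCM hinf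
  suffices h : ∃ n ∈ BadSet F M S, Accepts F (insert n S) M by
    obtain ⟨n, hn, ha⟩ := h
    exact hrej n hn ha
  rcases hcomp with ⟨S2, hS2, hlt⟩ | ⟨S2, hS2, hlt⟩
  · -- InitSeg t S : t is an initial segment of S, so t ⊆ S
    obtain ⟨n, hn⟩ := hinf.nonempty
    have htsS : t ⊆ S := hS2 ▸ Finset.subset_union_left
    refine ⟨n, hn, t, htF, Or.inl ⟨insert n S2, ?_, ?_⟩, ?_⟩
    · rw [Finset.union_insert, ← hS2]
    · intro a ha b hb
      rcases Finset.mem_insert.mp hb with rfl | hb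
      · exact hn.2.1 a (htsS ha)
      · exact hlt a ha b hb
    · intro x hx
      simp only [Finset.coe_sdiff, Set.mem_diff, Finset.mem_coe] at hx
      exact absurd (Finset.mem_insert_of_mem (htsS hx.1)) hx.2
  · -- InitSeg S t : S is an initial segment of t
    have hSt : S ⊆ t := hS2 ▸ Finset.subset_union_left
    by_cases hts : t \ S = ∅
    · -- then t = S
      have hts' : t ⊆ S := Finset.sdiff_eq_empty_iff_subset.mp hts
      obtain ⟨n, hn⟩ := hinf.nonempty
      refine ⟨n, hn, t, htF, Or.inl ⟨{n}, ?_, ?_⟩, ?_⟩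
      · rw [Finset.union_comm, ← Finset.insert_eq,
          Finset.Subset.antisymm hts' hSt]
      · intro a ha b hb
        rw [Finset.mem_singleton] at hb
        subst hb
        exact hn.2.1 a (hts' ha)
      · intro x hx
        simp only [Finset.coe_sdiff, Set.mem_diff, Finset.mem_coe] at hx
        exact absurd (Finset.mem_insert_of_mem (hts' hx.1)) hx.2
    · have hne : (t \ S).Nonempty := Finset.nonempty_iff_ne_empty.mpr hts
      set n := (t \ S).min' hne with hndef
      have hnmem : n ∈ t \ S := Finset.min'_mem _ _
      have hnC : n ∈ BadSet F M S := hsub (by exact_mod_cast hnmem)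
      refine ⟨n, hnC, t, htF, Or.inr ⟨(t \ S).erase n, ?_, ?_⟩, ?_⟩
      · rw [Finset.insert_union, ← Finset.union_insert,
          Finset.insert_erase hnmem, Finset.union_sdiff_of_subset hSt]
      · intro a ha b hb
        have hb1 := Finset.mem_of_mem_erase hb
        have hb2 := Finset.ne_of_mem_erase hb
        rcases Finset.mem_insert.mp ha with rfl | ha
        · exact lt_of_le_of_ne (Finset.min'_le _ _ hb1) (Ne.symm hb2)
        · have hbS2 : b ∈ S2 := by
            have hbt := (Finset.mem_sdiff.mp hb1).1
            rw [hS2] at hbt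
            rcases Finset.mem_union.mp hbt with h | h
            · exact absurd h (Finset.mem_sdiff.mp hb1).2
            · exact h
          exact hlt a ha b hbS2
      · intro x hx
        simp only [Finset.coe_sdiff, Set.mem_diff, Finset.mem_coe,
          Finset.mem_insert, not_or] at hx
        exact hCM (hsub (by
          simp only [Finset.coe_sdiff, Set.mem_diff, Finset.mem_coe]
          exact ⟨hx.1, hx.2.2⟩))

open Classical

/-- A bound exceeding every element of `BadSet F M S` when the latter is finite. -/
noncomputable def bnd (F : Set (Finset ℕ)) (M : Set ℕ) (S : Finset ℕ) : ℕ :=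
  if h : (BadSet F M S).Finite then h.toFinset.sup id else 0

lemma not_mem_badset {F : Set (Finset ℕ)} {M : Set ℕ} {S : Finset ℕ}
    (h : (BadSet F M S).Finite) {n : ℕ} (hn : bnd F M S < n) : n ∉ BadSet F M S := by
  intro hmem
  have : n ≤ h.toFinset.sup id := Finset.le_sup (f := id) (h.mem_toFinset.mpr hmem)
  rw [bnd, dif_pos h] at hn
  omega

/-- Strengthened form: if `M` decides all its finite subsets, there is an infinite
`N ⊆ M` such that whenever `N` strongly accepts a finite `S ⊆ N` and `n ∈ N` with
`max S < n`, then `N` strongly accepts `S ∪ {n}`. -/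
theorem strongly_accepts_insert_all (F : Set (Finset ℕ)) (hF : ThinFam F)
    (M : Set ℕ) (hM : M.Infinite)
    (hdec : ∀ T : Finset ℕ, (T : Set ℕ) ⊆ M → Decides F T M) :
    ∃ N ⊆ M, N.Infinite ∧
      ∀ S : Finset ℕ, (S : Set ℕ) ⊆ N → StronglyAccepts F S N →
        ∀ n ∈ N, (∀ a ∈ S, a < n) → StronglyAccepts F (insert n S) N := by
  classical
  -- a choice function for the next element
  obtain ⟨g, hg⟩ : ∃ g : Finset ℕ → ℕ, ∀ P : Finset ℕ,
      g P ∈ M ∧ P.sup id < g P ∧ ∀ S ∈ P.powerset, bnd F M S < g P := by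
    refine ⟨fun P => (hM.exists_gt (max (P.sup id) (P.powerset.sup (bnd F M)))).choose,
      fun P => ?_⟩
    obtain ⟨h1, h2⟩ := (hM.exists_gt (max (P.sup id) (P.powerset.sup (bnd F M)))).choose_spec
    refine ⟨h1, lt_of_le_of_lt (le_max_left _ _) h2, fun S hS => ?_⟩
    exact lt_of_le_of_lt (le_trans (Finset.le_sup hS) (le_max_right _ _)) h2
  set Pk : ℕ → Finset ℕ := fun k => Nat.rec ∅ (fun _ Q => insert (g Q) Q) k with hPk
  set f : ℕ → ℕ := fun k => g (Pk k) with hf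
  have hPsucc : ∀ k, Pk (k + 1) = insert (f k) (Pk k) := fun k => rfl
  have hPmono : ∀ j k, j ≤ k → Pk j ⊆ Pk k := by
    intro j k hjk
    induction k with
    | zero => simpa [Nat.le_zero.mp hjk] using Finset.Subset.refl _
    | succ k ih =>
      rcases Nat.lt_or_ge j (k + 1) with h | h
      · exact (ih (Nat.lt_succ_iff.mp h)).trans
          (by rw [hPsucc]; exact Finset.subset_insert _ _)
      · have : j = k + 1 := le_antisymm hjk h
        subst this; exact Finset.Subset.refl _
  have hfmono : StrictMono f := by
    apply strictMono_nat_of_lt_succ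
    intro k
    have h1 : f k ∈ Pk (k + 1) := by rw [hPsucc]; exact Finset.mem_insert_self _ _
    calc f k = id (f k) := rfl
      _ ≤ (Pk (k + 1)).sup id := Finset.le_sup h1
      _ < g (Pk (k + 1)) := (hg (Pk (k + 1))).2.1
  refine ⟨Set.range f, ?_, Set.infinite_range_of_injective hfmono.injective, ?_⟩
  · rintro x ⟨k, rfl⟩
    exact (hg (Pk k)).1
  have hNM : Set.range f ⊆ M := by rintro x ⟨k, rfl⟩; exact (hg (Pk k)).1
  intro S hS hSA n hn hlt
  obtain ⟨k, rfl⟩ := hn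
  -- S ⊆ Pk k
  have hSP : S ∈ (Pk k).powerset := by
    rw [Finset.mem_powerset]
    intro a ha
    obtain ⟨j, hj⟩ := hS ha
    have hjk : j < k := by
      by_contra h
      have := hfmono.monotone (Nat.le_of_not_lt h)
      have := hlt a ha
      omega
    rw [← hj]
    exact hPmono (j + 1) k hjk (by rw [hPsucc]; exact Finset.mem_insert_self _ _)
  -- M strongly accepts S
  have hSM : StronglyAccepts F S M := by
    rcases hdec S (hS.trans hNM) with h | h
    · exact absurd (accepts_mono (hSA (Set.range f) subset_rfl
        (Set.infinite_range_of_injective hfmono.injective)) hNM) h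
    · exact h
  have hfin := badset_finite F M hdec S (hS.trans hNM) hSM
  have hnb : f k ∉ BadSet F M S := not_mem_badset hfin ((hg (Pk k)).2.2 S hSP)
  have hstrong : StronglyAccepts F (insert (f k) S) M := by
    by_contra h
    exact hnb ⟨(hg (Pk k)).1, hlt, h⟩
  intro C hCN hCinf
  exact hstrong C (hCN.trans hNM) hCinf
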